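/- Let 0 < γ ≤ 1 and let ω be the γ-norm on ℝ² given by ω(x₁,x₂) = |x₁| if |x₁| > |x₂| and ω(x₁,x₂) = (|(x₁+x₂)/2|^γ + |(x₁−x₂)/2|^γ)^{1/γ} otherwise. Then E_γ = (ℝ², ω) satisfies condition (Q_γ): for all u, v ∈ [0,∞)², sup_{x ∈ Q_{u,v}} ω(x)^γ ≤ ω(u)^γ + ω(v)^γ, where Q_{u,v} = ∏_{i=1}^2 [M_i − m_i, M_i + m_i], m_i = min(u_i,v_i), M_i = max(u_i,v_i). -/

import Mathlib

/-!
For `w ≥ 0` write `M = max w₁ w₂`; in both branches of its definition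
`ω(w)^γ = ((M + w₁)/2)^γ + ((M - w₁)/2)^γ`. For `x ∈ Q_{u,v}` one has `M_x ≤ M_u + M_v` and
`x₁ ≥ |u₁ - v₁|`, so `s = (M_x + x₁)/2`, `d = (M_x - x₁)/2` and the cross sums
`P = (M_u + u₁)/2 + (M_v - v₁)/2`, `Q = (M_u - u₁)/2 + (M_v + v₁)/2` satisfy `d ≤ P`, `d ≤ Q`,
`s + d ≤ P + Q`. For the concave increasing `t ↦ t^γ` this gives `s^γ + d^γ ≤ P^γ + Q^γ`, and
subadditivity splits `P^γ` and `Q^γ` back into the four terms of `ω(u)^γ + ω(v)^γ`.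
-/

noncomputable section

/-- The rotated γ-norm `ω` on `ℝ²`. -/
def omg (γ : ℝ) : ℝ × ℝ → ℝ := fun x =>
  if |x.2| < |x.1| then |x.1|
  else (|(x.1 + x.2)/2| ^ γ + |(x.1 - x.2)/2| ^ γ) ^ (1/γ)

open Set

theorem ConcaveOn.map_add_sub_map_le_of_le {s : Set ℝ} {f : ℝ → ℝ} (hf : ConcaveOn ℝ s f)
    {a b c : ℝ} (hba : b ≤ a) (hc : 0 ≤ c) (hb : b ∈ s) (hac : a + c ∈ s) :
    f (a + c) - f a ≤ f (b + c) - f b := by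
  rcases hc.eq_or_lt with rfl | hc
  · simp
  -- `a` and `b + c` are convex combinations of `b` and `a + c` with swapped weights
  set θ := c / (a + c - b)
  have hθ : θ * (a + c - b) = c := div_mul_cancel₀ _ (by linarith)
  have hθ0 : 0 ≤ θ := div_nonneg hc.le (by linarith)
  have hθ1 : θ ≤ 1 := div_le_one_of_le₀ (by linarith) (by linarith)
  have ha := hf.2 hb hac hθ0 (sub_nonneg.2 hθ1) (add_sub_cancel θ 1)
  have hbc := hf.2 hb hac (sub_nonneg.2 hθ1) hθ0 (sub_add_cancel 1 θ)
  simp only [smul_eq_mul] at ha hbc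
  rw [show θ * b + (1 - θ) * (a + c) = a by linear_combination -hθ] at ha
  rw [show (1 - θ) * b + θ * (a + c) = b + c by linear_combination hθ] at hbc
  linarith

theorem ConcaveOn.map_add_map_le_map_add_map {f : ℝ → ℝ} (hf : ConcaveOn ℝ (Ici 0) f)
    (hmono : MonotoneOn f (Ici 0)) {s d P Q : ℝ} (hs : 0 ≤ s) (hd : 0 ≤ d)
    (hdP : d ≤ P) (hdQ : d ≤ Q) (hsum : s + d ≤ P + Q) :
    f s + f d ≤ f P + f Q := by
  rcases le_or_gt s P with hsP | hPs
  · exact add_le_add (hmono hs (hs.trans hsP) hsP) (hmono hd (hd.trans hdQ) hdQ)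
  · have hinc := hf.map_add_sub_map_le_of_le hdP (sub_nonneg.2 hPs.le) hd
      (by simpa using hs)
    have hQ : f (d + (s - P)) ≤ f Q := hmono (by simp; linarith) (by simp; linarith) (by linarith)
    rw [add_sub_cancel] at hinc
    linarith

theorem omg_rpow_eq {γ : ℝ} (hγ : 0 < γ) {w : ℝ × ℝ} (h1 : 0 ≤ w.1) (h2 : 0 ≤ w.2) :
    omg γ w ^ γ = ((max w.1 w.2 + w.1) / 2) ^ γ + ((max w.1 w.2 - w.1) / 2) ^ γ := by
  rw [omg, abs_of_nonneg h1, abs_of_nonneg h2]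
  split_ifs with h
  · simp [max_eq_left h.le, Real.zero_rpow hγ.ne']
  · rw [max_eq_right (not_lt.1 h), abs_of_nonneg (by linarith),
      abs_of_nonpos (by linarith), ← neg_div, neg_sub, add_comm w.2, ← Real.rpow_mul
        (add_nonneg (Real.rpow_nonneg (by linarith) _) (Real.rpow_nonneg (by linarith) _)),
      one_div_mul_cancel hγ.ne', Real.rpow_one]

theorem omg_conditionQ (γ : ℝ) (hγ : 0 < γ) (hγ1 : γ ≤ 1)
    (u v : ℝ × ℝ) (hu1 : 0 ≤ u.1) (hu2 : 0 ≤ u.2) (hv1 : 0 ≤ v.1) (hv2 : 0 ≤ v.2)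
    (x : ℝ × ℝ)
    (hx1 : max u.1 v.1 - min u.1 v.1 ≤ x.1 ∧ x.1 ≤ max u.1 v.1 + min u.1 v.1)
    (hx2 : max u.2 v.2 - min u.2 v.2 ≤ x.2 ∧ x.2 ≤ max u.2 v.2 + min u.2 v.2) :
    omg γ x ^ γ ≤ omg γ u ^ γ + omg γ v ^ γ := by
  rw [max_sub_min_eq_abs', max_add_min] at hx1 hx2
  have hx1' : 0 ≤ x.1 := (abs_nonneg _).trans hx1.1
  have hx2' : 0 ≤ x.2 := (abs_nonneg _).trans hx2.1
  rw [omg_rpow_eq hγ hx1' hx2', omg_rpow_eq hγ hu1 hu2, omg_rpow_eq hγ hv1 hv2]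
  set mx := max x.1 x.2
  set mu := max u.1 u.2
  set mv := max v.1 v.2
  have hm : mx ≤ mu + mv := max_le (add_le_add (le_max_left ..) (le_max_left ..) |>.trans' hx1.2)
    (add_le_add (le_max_right ..) (le_max_right ..) |>.trans' hx2.2)
  have hsub {a b : ℝ} (ha : 0 ≤ a) (hb : 0 ≤ b) : (a + b) ^ γ ≤ a ^ γ + b ^ γ :=
    Real.rpow_add_le_add_rpow ha hb hγ.le hγ1
  have hmaj := (Real.concaveOn_rpow hγ.le hγ1).map_add_map_le_map_add_map
    (Real.monotoneOn_rpow_Ici_of_exponent_nonneg hγ.le)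
    (s := (mx + x.1) / 2) (d := (mx - x.1) / 2)
    (P := (mu + u.1) / 2 + (mv - v.1) / 2) (Q := (mu - u.1) / 2 + (mv + v.1) / 2)
    (by positivity) (by linarith [le_max_left x.1 x.2])
    (by linarith [neg_abs_le (u.1 - v.1)]) (by linarith [le_abs_self (u.1 - v.1)]) (by linarith)
  have hP := hsub (a := (mu + u.1) / 2) (b := (mv - v.1) / 2) (by positivity)
    (by linarith [le_max_left v.1 v.2])
  have hQ := hsub (a := (mu - u.1) / 2) (b := (mv + v.1) / 2)
    (by linarith [le_max_left u.1 u.2]) (by positivity)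
  linarith
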